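/- Let n ≥ 1, γ ≥ 0, Γ ≥ 0, t ≥ 0, and fix q¹, …, qⁿ ∈ ℝ⁴ with ‖qʲ‖ = 1 for every j. The linear map on ℝ^{3n} × ℝ^{4n} given by (p, π¹, …, πⁿ) ↦ (e^{−γt}·p, exp(−Γ·t·J(q¹))·π¹, …, exp(−Γ·t·J(qⁿ))·πⁿ) — the exact time-t flow of the damping subsystem ṗ = −γp, π̇ʲ = −Γ J(qʲ) πʲ — has determinant exp(−n(3γ + Γ)·t). -/

import Mathlib

noncomputable section
open Matrix
open scoped InnerProductSpace BigOperators

/-- `S₁ q = (−q₁, q₀, q₃, −q₂)`. -/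
def S1 : Matrix (Fin 4) (Fin 4) ℝ := !![0,-1,0,0; 1,0,0,0; 0,0,0,1; 0,0,-1,0]
/-- `S₂ q = (−q₂, −q₃, q₀, q₁)`. -/
def S2 : Matrix (Fin 4) (Fin 4) ℝ := !![0,0,-1,0; 0,0,0,-1; 1,0,0,0; 0,1,0,0]
/-- `S₃ q = (−q₃, q₂, −q₁, q₀)`. -/
def S3 : Matrix (Fin 4) (Fin 4) ℝ := !![0,0,0,-1; 0,0,1,0; 0,-1,0,0; 1,0,0,0]
/-- The family `S l`, `l = 1, 2, 3` (0-indexed). -/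
def S : Fin 3 → Matrix (Fin 4) (Fin 4) ℝ := ![S1, S2, S3]

/-- `J(q) = (Σₗ (1/Iₗ) (Sₗ q)(Sₗ q)ᵀ) / (Σₗ 1/Iₗ)`. -/
def Jmat (I : Fin 3 → ℝ) (q : Fin 4 → ℝ) : Matrix (Fin 4) (Fin 4) ℝ :=
  (∑ l : Fin 3, 1 / I l)⁻¹ • ∑ l : Fin 3, (1 / I l) • vecMulVec (S l *ᵥ q) (S l *ᵥ q)

/-- `M = 4 / (Σₗ 1/Iₗ)`. -/
def Mc (I : Fin 3 → ℝ) : ℝ := 4 / ∑ l : Fin 3, 1 / I l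

/-- `λₗ = (1/Iₗ) / (Σₘ 1/Iₘ)`. -/
def lam (I : Fin 3 → ℝ) (l : Fin 3) : ℝ := (1 / I l) / ∑ m : Fin 3, 1 / I m

/-!
The flow is block diagonal: the `p`-block is the scalar `e^{-γt}` on a space of dimension `3n`,
and each `πʲ`-block is `exp (-Γt J(qʲ))`. Since `J(q)` is symmetric, `det (exp A) = exp (tr A)`
follows from the spectral theorem, and since every `Sₗ` is orthogonal,
`tr J(q) = Σₗ λₗ ‖Sₗ q‖² = ‖q‖² = 1`.
-/

namespace Matrix

variable {𝕜 n : Type*} [RCLike 𝕜] [Fintype n] [DecidableEq n]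

theorem IsHermitian.det_exp {A : Matrix n n 𝕜} (hA : A.IsHermitian) :
    (NormedSpace.exp A).det = NormedSpace.exp A.trace := by
  set U : Matrix n n 𝕜 := (hA.eigenvectorUnitary : Matrix n n 𝕜)
  have hUU : star U * U = 1 := Unitary.star_mul_self_of_mem hA.eigenvectorUnitary.2
  have hU : IsUnit U := (isUnit_iff_isUnit_det U).mpr (isUnit_det_of_left_inverse hUU)
  conv_lhs => rw [hA.spectral_theorem]
  rw [Unitary.conjStarAlgAut_apply, ← inv_eq_left_inv hUU, exp_conj _ _ hU, det_conj hU,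
    exp_diagonal, det_diagonal, hA.trace_eq_sum_eigenvalues, NormedSpace.exp_sum]
  simp only [Pi.coe_exp, Function.comp_apply]

end Matrix

theorem EuclideanSpace.dotProduct_self_eq_norm_sq {ι : Type*} [Fintype ι]
    (x : EuclideanSpace ℝ ι) : x.ofLp ⬝ᵥ x.ofLp = ‖x‖ ^ 2 := by
  rw [← real_inner_self_eq_norm_sq, EuclideanSpace.inner_eq_star_dotProduct, star_trivial]

theorem S_transpose_mul_self (l : Fin 3) : (S l)ᵀ * S l = 1 := by
  fin_cases l <;> ext i j <;> fin_cases i <;> fin_cases j <;>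
    simp [S, S1, S2, S3, mul_apply, Fin.sum_univ_four, one_apply]

theorem S_mulVec_dotProduct_self (l : Fin 3) (q : Fin 4 → ℝ) :
    (S l *ᵥ q) ⬝ᵥ (S l *ᵥ q) = q ⬝ᵥ q := by
  rw [dotProduct_mulVec, ← mulVec_transpose, mulVec_mulVec, S_transpose_mul_self, one_mulVec]

theorem Jmat_isHermitian (I : Fin 3 → ℝ) (q : Fin 4 → ℝ) : (Jmat I q).IsHermitian := by
  simp [Jmat, IsHermitian, transpose_sum, transpose_smul, transpose_vecMulVec]

theorem trace_Jmat {I : Fin 3 → ℝ} (hI : ∑ l, 1 / I l ≠ 0) (q : Fin 4 → ℝ) :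
    (Jmat I q).trace = q ⬝ᵥ q := by
  simp only [Jmat, trace_smul, trace_sum, trace_vecMulVec, S_mulVec_dotProduct_self, smul_eq_mul,
    ← Finset.sum_mul]
  field_simp

theorem det_exp_smul_Jmat {I : Fin 3 → ℝ} (hI : ∑ l, 1 / I l ≠ 0) (q : Fin 4 → ℝ) (c : ℝ) :
    (NormedSpace.exp (c • Jmat I q)).det = Real.exp (c * (q ⬝ᵥ q)) := by
  rw [((Jmat_isHermitian I q).smul (IsSelfAdjoint.all c)).det_exp, trace_smul, trace_Jmat hI,
    Real.exp_eq_exp_ℝ, smul_eq_mul]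

theorem stmt12_general (n : ℕ) (I : Fin 3 → ℝ) (hI : ∀ l, 0 < I l)
    (γ Γ t : ℝ)
    (q : Fin n → EuclideanSpace ℝ (Fin 4)) (hq : ∀ j, ‖q j‖ = 1)
    (F : ((Fin n → Fin 3 → ℝ) × (Fin n → Fin 4 → ℝ)) →ₗ[ℝ]
         ((Fin n → Fin 3 → ℝ) × (Fin n → Fin 4 → ℝ)))
    (hF : ∀ (p : Fin n → Fin 3 → ℝ) (π : Fin n → Fin 4 → ℝ),
      F (p, π) = (fun j i => Real.exp (-(γ * t)) * p j i,
                  fun j => NormedSpace.exp ((-(Γ * t)) • Jmat I (q j)) *ᵥ π j)) :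
    LinearMap.det F = Real.exp (-(n * (3 * γ + Γ)) * t) := by
  have hIsum : ∑ l, 1 / I l ≠ 0 :=
    (Finset.sum_pos (fun l _ => one_div_pos.mpr (hI l)) Finset.univ_nonempty).ne'
  have hqq (j : Fin n) : (q j).ofLp ⬝ᵥ (q j).ofLp = 1 := by
    rw [EuclideanSpace.dotProduct_self_eq_norm_sq, hq j, one_pow]
  have hF_prodMap : F = (Real.exp (-(γ * t)) • LinearMap.id).prodMap (LinearMap.pi fun j =>
      (toLin' (NormedSpace.exp ((-(Γ * t)) • Jmat I (q j)))).comp (LinearMap.proj j)) :=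
    LinearMap.ext fun ⟨p, π⟩ => (hF p π).trans rfl
  rw [hF_prodMap, LinearMap.det_prodMap, LinearMap.det_smul, LinearMap.det_id, LinearMap.det_pi]
  simp only [LinearMap.det_toLin', det_exp_smul_Jmat hIsum, hqq, Module.finrank_pi_fintype,
    Module.finrank_self, Finset.sum_const, Finset.card_univ, Fintype.card_fin, smul_eq_mul,
    mul_one, Finset.prod_const, ← Real.exp_nat_mul, ← Real.exp_add]
  congr 1
  push_cast
  ring

/-- The exact time-`t` flow of the damping subsystem `ṗ = −γ p`, `π̇ʲ = −Γ J(qʲ) πʲ`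
has determinant `exp (−n (3γ + Γ) t)`. -/
theorem stmt12 (n : ℕ) (hn : 1 ≤ n) (I : Fin 3 → ℝ) (hI : ∀ l, 0 < I l)
    (γ Γ t : ℝ) (hγ : 0 ≤ γ) (hΓ : 0 ≤ Γ) (ht : 0 ≤ t)
    (q : Fin n → EuclideanSpace ℝ (Fin 4)) (hq : ∀ j, ‖q j‖ = 1)
    (F : ((Fin n → Fin 3 → ℝ) × (Fin n → Fin 4 → ℝ)) →ₗ[ℝ]
         ((Fin n → Fin 3 → ℝ) × (Fin n → Fin 4 → ℝ)))
    (hF : ∀ (p : Fin n → Fin 3 → ℝ) (π : Fin n → Fin 4 → ℝ),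
      F (p, π) = (fun j i => Real.exp (-(γ * t)) * p j i,
                  fun j => NormedSpace.exp ((-(Γ * t)) • Jmat I (q j)) *ᵥ π j)) :
    LinearMap.det F = Real.exp (-(n * (3 * γ + Γ)) * t) :=
  stmt12_general n I hI γ Γ t q hq F hF
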